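/- arXiv:1605.04517 — 9 statements merged into one kernel-verified Lean document; each statement's English description precedes it below -/
import Mathlib

section
/- Jacobi–Gegenbauer summation (even case): for every natural number n ≥ 2, every N ∈ ℕ, every λ ∈ ℂ and every i with 0 ≤ i ≤ N, one has Σ_{j=0}^{N−i} (−1)^{N−j−i} · binom(N−j, i) · a_j^{(N)}(λ) = α_i^{(N)}(λ). -/
open Finset Polynomial

noncomputable def aC (n N j : ℕ) (l : ℂ) : ℂ :=
  (-2 : ℂ) ^ (N - j) *
    ((N.factorial : ℂ) / ((j.factorial : ℂ) * ((2 * N - 2 * j).factorial : ℂ))) *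
    ∏ k ∈ Finset.Ico j N, (2 * l - 4 * (N : ℂ) + 2 * (k : ℂ) + (n : ℂ) + 1)

noncomputable def bC (n N j : ℕ) (l : ℂ) : ℂ :=
  (-2 : ℂ) ^ (N - j) *
    ((N.factorial : ℂ) / ((j.factorial : ℂ) * ((2 * N - 2 * j + 1).factorial : ℂ))) *
    ∏ k ∈ Finset.Ico j N, (2 * l - 4 * (N : ℂ) + 2 * (k : ℂ) + (n : ℂ) - 1)

noncomputable def bCZ (n M : ℕ) (j : ℤ) (l : ℂ) : ℂ :=
  if 0 ≤ j ∧ j ≤ (M : ℤ) then bC n M j.toNat l else 0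

noncomputable def alphaC (n N i : ℕ) (l : ℂ) : ℂ :=
  (-1 : ℂ) ^ i * 2 ^ N * ((N.factorial : ℂ) / ((2 * N).factorial : ℂ)) * (N.choose i : ℂ) *
    (∏ k ∈ Finset.Icc (i + 1) N, (2 * l + (n : ℂ) - 2 * (k : ℂ))) *
    ∏ k ∈ Finset.Icc 1 i, (2 * l + (n : ℂ) - 2 * (k : ℂ) - 2 * (N : ℂ) + 1)

noncomputable def betaC (n N i : ℕ) (l : ℂ) : ℂ :=
  (-1 : ℂ) ^ i * 2 ^ N * ((N.factorial : ℂ) / ((2 * N + 1).factorial : ℂ)) * (N.choose i : ℂ) *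
    (∏ k ∈ Finset.Icc (i + 1) N, (2 * l + (n : ℂ) - 2 * (k : ℂ))) *
    ∏ k ∈ Finset.Icc 1 i, (2 * l + (n : ℂ) - 2 * (k : ℂ) - 2 * (N : ℂ) - 1)

noncomputable def gammaC (n N i : ℕ) (l p : ℂ) : ℂ :=
  (-1 : ℂ) ^ i * 2 ^ N *
    ((N.factorial : ℂ) / (((N : ℂ) + 1) * ((2 * N + 1).factorial : ℂ))) *
    ((N + 1).choose i : ℂ) *
    ((l + p - 2 * (N : ℂ) - 1) * ((N : ℂ) + 1) * (2 * l + (n : ℂ) - 2 * (i : ℂ)) +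
      (l + (n : ℂ) - p) * (2 * (N : ℂ) + 1) * ((N : ℂ) - (i : ℂ) + 1)) *
    (∏ k ∈ Finset.Icc (i + 1) N, (2 * l + (n : ℂ) - 2 * (k : ℂ))) *
    ∏ k ∈ Finset.Icc 1 (i - 1), (2 * l + (n : ℂ) - 2 * (k : ℂ) - 2 * (N : ℂ) - 1)

noncomputable def poch (a : ℂ) (l : ℕ) : ℂ :=
  ∏ m ∈ Finset.range l, (a + (m : ℂ))

/-!
Split the product in `a_j^{(N)}` at `k = N - i`: the factors with `k ≥ N - i` do not depend on `j`,
and the others form `2^{N-i-j} X^{\underline{N-i-j}}` with `X = λ + n/2 - N - i - 1/2`. Moreover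
`1 / (2N-2j)! = 4^j N! (N - 1/2)^{\underline j} / ((2N)! (N-j)!)`, so once `binom(N-j, i)` cancels
`(N-j)!`, each summand is a `j`-independent constant times
`binom(N-i, j) (N - 1/2)^{\underline j} X^{\underline{N-i-j}}`. Chu–Vandermonde sums these to
`(λ + n/2 - i - 1)^{\underline{N-i}} = 2^{i-N} ∏_{k=i+1}^{N} (2λ + n - 2k)`.
-/

open scoped Nat

theorem descPochhammer_int_smeval_eq_eval {R : Type*} [CommRing R] (k : ℕ) (x : R) :
    (descPochhammer ℤ k).smeval x = (descPochhammer R k).eval x := by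
  induction k with
  | zero => simp
  | succ k ih =>
    simp [descPochhammer_succ_right, smeval_mul, ih, smeval_sub, smeval_natCast, smeval_X]

theorem descPochhammer_eval_add {R : Type*} [CommRing R] (x y : R) (k : ℕ) :
    (descPochhammer R k).eval (x + y) = ∑ j ∈ range (k + 1),
      (k.choose j : R) * (descPochhammer R j).eval x * (descPochhammer R (k - j)).eval y := by
  rw [← descPochhammer_int_smeval_eq_eval, Ring.descPochhammer_smeval_add k (Commute.all x y),
    Nat.sum_antidiagonal_eq_sum_range_succ_mk]
  simp only [descPochhammer_int_smeval_eq_eval, mul_assoc]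

theorem two_pow_mul_descPochhammer_eval_half {K : Type*} [Field K] [CharZero K] (y : K) (k : ℕ) :
    2 ^ k * (descPochhammer K k).eval (y / 2) = ∏ u ∈ range k, (y - 2 * u) := by
  rw [descPochhammer_eval_eq_prod_range, ← card_range k, ← prod_const, card_range,
    ← prod_mul_distrib]
  refine prod_congr rfl fun u _ => ?_
  ring

theorem four_pow_mul_factorial_mul_descPochhammer_eval_sub_half {K : Type*} [Field K]
    [CharZero K] (a t : ℕ) :
    4 ^ t * ((a + t)! : K) * (2 * a)! * (descPochhammer K t).eval ((a + t : K) - 1 / 2)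
      = (2 * (a + t))! * a ! := by
  induction t with
  | zero => simp [mul_comm]
  | succ t ih =>
    have hstep : (descPochhammer K (t + 1)).eval ((a + (t + 1 : ℕ) : K) - 1 / 2)
        = (a + t + 1 / 2) * (descPochhammer K t).eval ((a + t : K) - 1 / 2) := by
      simp only [descPochhammer_succ_left, eval_mul, eval_comp, eval_sub, eval_X, eval_one]
      congr 2 <;> push_cast <;> ring
    rw [hstep, ← add_assoc, show 2 * (a + t + 1) = 2 * (a + t) + 1 + 1 by ring,
      Nat.factorial_succ, Nat.factorial_succ, Nat.factorial_succ]
    push_cast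
    linear_combination (4 * ((a : K) + t + 1) * ((a : K) + t + 1 / 2)) * ih

theorem prod_Ico_aC_split (n i s t : ℕ) (l : ℂ) :
    ∏ k ∈ Ico t (i + s + t), (2 * l - 4 * ((i + s + t : ℕ) : ℂ) + 2 * (k : ℂ) + (n : ℂ) + 1)
      = (∏ u ∈ range s, (2 * l + n - 2 * ((i + s + t : ℕ) : ℂ) - 2 * i - 1 - 2 * u)) *
          ∏ k ∈ Icc 1 i, (2 * l + n - 2 * (k : ℂ) - 2 * ((i + s + t : ℕ) : ℂ) + 1) := by
  rw [← prod_Ico_consecutive _ (show t ≤ s + t by omega) (show s + t ≤ i + s + t by omega),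
    prod_Ico_eq_prod_range, prod_Ico_eq_prod_range, ← Ico_add_one_right_eq_Icc,
    prod_Ico_eq_prod_range, show s + t - t = s by omega, show i + s + t - (s + t) = i by omega,
    Nat.add_sub_cancel]
  congr 1 <;> rw [← prod_range_reflect] <;> refine prod_congr rfl fun u hu => ?_ <;>
    push_cast [Nat.sub_sub, Nat.cast_sub (Nat.one_add_le_iff.2 (mem_range.1 hu))] <;> ring

theorem prod_Icc_alphaC_eq_prod_range (n N i : ℕ) (l : ℂ) :
    ∏ k ∈ Icc (i + 1) N, (2 * l + n - 2 * (k : ℂ))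
      = ∏ u ∈ range (N - i), (2 * l + n - 2 * i - 2 - 2 * u) := by
  rw [← Ico_add_one_right_eq_Icc, prod_Ico_eq_prod_range, Nat.add_sub_add_right]
  refine prod_congr rfl fun u _ => ?_
  push_cast
  ring

theorem neg_one_pow_mul_choose_mul_aC (n N i j : ℕ) (l : ℂ) (hij : i + j ≤ N) :
    (-1 : ℂ) ^ (N - j - i) * ((N - j).choose i : ℂ) * aC n N j l
      = (-1) ^ i * 2 ^ (N + (N - i)) * (N ! : ℂ) ^ 2 / (i ! * (N - i)! * (2 * N)!) *
          (∏ k ∈ Icc 1 i, (2 * l + n - 2 * (k : ℂ) - 2 * N + 1)) *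
        (((N - i).choose j : ℂ) * (descPochhammer ℂ j).eval ((N : ℂ) - 1 / 2) *
          (descPochhammer ℂ (N - i - j)).eval ((2 * l + n - 2 * N - 2 * i - 1) / 2)) := by
  obtain ⟨s, rfl⟩ : ∃ s, N = i + s + j := ⟨N - i - j, by omega⟩
  have hY : (descPochhammer ℂ j).eval (((i + s + j : ℕ) : ℂ) - 1 / 2)
      = (2 * (i + s + j))! * (i + s)! / (2 ^ (2 * j) * (i + s + j)! * (2 * (i + s))!) := by
    rw [eq_div_iff (by simp [Nat.factorial_ne_zero]), pow_mul, mul_comm,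
      ← four_pow_mul_factorial_mul_descPochhammer_eval_sub_half]
    push_cast
    ring
  have hsign : (-1 : ℂ) ^ s * (-2) ^ (i + s) = (-1) ^ i * 2 ^ (i + s) := by
    rw [neg_pow 2, ← mul_assoc, ← pow_add, show s + (i + s) = i + 2 * s by ring, pow_add,
      pow_mul, neg_one_sq, one_pow, mul_one]
  rw [aC, prod_Ico_aC_split, ← two_pow_mul_descPochhammer_eval_half,
    show i + s + j - j - i = s by omega, show i + s + j - i - j = s by omega,
    show i + s + j - j = i + s by omega, show i + s + j - i = s + j by omega,
    show 2 * (i + s + j) - 2 * j = 2 * (i + s) by omega,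
    hY, Nat.cast_choose ℂ (Nat.le_add_right i s), Nat.cast_choose ℂ (Nat.le_add_left j s),
    Nat.add_sub_cancel_left, Nat.add_sub_cancel]
  rw [mul_mul_mul_comm, ← mul_assoc ((-1 : ℂ) ^ s), hsign]
  field_simp [Nat.factorial_ne_zero]
  ring

theorem jacobi_gegenbauer_sum_even_general (n : ℕ) (N : ℕ) (l : ℂ)
    (i : ℕ) (hi : i ≤ N) :
    ∑ j ∈ Finset.range (N - i + 1),
        (-1 : ℂ) ^ (N - j - i) * ((N - j).choose i : ℂ) * aC n N j l
      = alphaC n N i l := by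
  rw [sum_congr rfl fun j hj => neg_one_pow_mul_choose_mul_aC n N i j l
      (by rw [mem_range] at hj; omega),
    ← mul_sum, ← descPochhammer_eval_add, alphaC, prod_Icc_alphaC_eq_prod_range,
    ← two_pow_mul_descPochhammer_eval_half, Nat.cast_choose ℂ hi,
    show (N : ℂ) - 1 / 2 + (2 * l + n - 2 * N - 2 * i - 1) / 2 = (2 * l + n - 2 * i - 2) / 2 by ring]
  field_simp
  ring

theorem jacobi_gegenbauer_sum_even (n : ℕ) (hn : 2 ≤ n) (N : ℕ) (l : ℂ)
    (i : ℕ) (hi : i ≤ N) :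
    ∑ j ∈ Finset.range (N - i + 1),
        (-1 : ℂ) ^ (N - j - i) * ((N - j).choose i : ℂ) * aC n N j l
      = alphaC n N i l :=
  jacobi_gegenbauer_sum_even_general n N l i hi
end

section
/- Jacobi–Gegenbauer summation (odd case): for every natural number n ≥ 2, every N ∈ ℕ, every λ ∈ ℂ and every i with 0 ≤ i ≤ N, one has Σ_{j=0}^{N−i} (−1)^{N−j−i} · binom(N−j, i) · b_j^{(N)}(λ) = β_i^{(N)}(λ). -/
open Finset Polynomial

/-!
With `w = λ + n/2 - N - 3/2`, the coefficient `b_j` equals `(-4)^(N-j) N!/(j! (2N-2j+1)!)` times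
the falling factorial `w^{(N-j)}`, and `(2m+1)! = 2^m m! (2m+1)‼`. Splitting
`w^{(N-j)} = w^{(i)} (w-i)^{(N-i-j)}`, the `j`-th summand becomes one fixed multiple of
`binom(N-i, j) (N+1/2)^{(j)} (w-i)^{(N-i-j)}`; the half-integer falling factorial `(N+1/2)^{(j)}`
is what absorbs the odd double factorials. By the Chu–Vandermonde identity the sum is that
multiple of `(λ+n/2-i-1)^{(N-i)}`, and so is `β_i`.
-/

open Nat

theorem descPochhammer_eval_add_eq_sum {R : Type*} [CommRing R] (x y : R) (M : ℕ) :
    (descPochhammer R M).eval (x + y) = ∑ j ∈ range (M + 1),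
      (M.choose j : R) * (descPochhammer R j).eval x * (descPochhammer R (M - j)).eval y := by
  have key := Ring.descPochhammer_smeval_add M (Commute.all x y)
  simp only [← aeval_eq_smeval, aeval_def, eval₂_eq_eval_map, descPochhammer_map] at key
  rw [key, Nat.sum_antidiagonal_eq_sum_range_succ_mk]
  simp [mul_assoc]

theorem descPochhammer_add_eval {R : Type*} [CommRing R] (x : R) (a b : ℕ) :
    (descPochhammer R (a + b)).eval x
      = (descPochhammer R a).eval x * (descPochhammer R b).eval (x - a) := by
  simp [← descPochhammer_mul]

theorem prod_range_two_mul_sub {R : Type*} [CommRing R] (z : R) (m : ℕ) :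
    ∏ s ∈ range m, (2 * z - 2 * s) = 2 ^ m * (descPochhammer R m).eval z := by
  simp [descPochhammer_eval_eq_prod_range, ← mul_sub, prod_mul_distrib]

theorem Nat.factorial_two_mul_add_one (k : ℕ) : (2 * k + 1)! = 2 ^ k * k ! * (2 * k + 1)‼ := by
  rw [factorial_eq_mul_doubleFactorial, doubleFactorial_two_mul]
  ring

theorem descPochhammer_eval_add_half_mul {K : Type*} [Field K] [CharZero K] (a j : ℕ) :
    (descPochhammer K j).eval (((a + j : ℕ) : K) + 1 / 2) * (2 ^ j * ((2 * a + 1)‼ : K))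
      = ((2 * (a + j) + 1)‼ : K) := by
  induction j generalizing a with
  | zero => simp
  | succ j ih =>
    have h := ih (a + 1)
    rw [show a + 1 + j = a + (j + 1) by ring, show 2 * (a + 1) + 1 = 2 * a + 1 + 2 by ring,
      doubleFactorial_add_two] at h
    rw [descPochhammer_succ_eval, ← h]
    push_cast
    ring

theorem bC_eq_descPochhammer (n N j : ℕ) (l : ℂ) (hj : j ≤ N) :
    bC n N j l = (-4) ^ (N - j) * (N ! / (j ! * (2 * (N - j) + 1)!))
      * (descPochhammer ℂ (N - j)).eval (l + n / 2 - N - 3 / 2) := by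
  obtain ⟨m, rfl⟩ := Nat.exists_eq_add_of_le hj
  have hprod : ∏ k ∈ Ico j (j + m), (2 * l - 4 * ((j + m : ℕ) : ℂ) + 2 * k + n - 1)
      = ∏ s ∈ range m, (2 * (l + n / 2 - (j + m : ℕ) - 3 / 2) - 2 * s) := by
    rw [prod_Ico_eq_prod_range, ← prod_range_reflect, Nat.add_sub_cancel_left]
    refine prod_congr rfl fun s hs => ?_
    have hs' : ((j + (m - 1 - s) : ℕ) : ℂ) + 1 + s = j + m := by
      have := mem_range.mp hs
      exact_mod_cast (by omega : j + (m - 1 - s) + 1 + s = j + m)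
    push_cast at hs' ⊢
    linear_combination 2 * hs'
  rw [bC, hprod, prod_range_two_mul_sub, Nat.add_sub_cancel_left,
    show 2 * (j + m) - 2 * j + 1 = 2 * m + 1 by omega, show (-4 : ℂ) = -2 * 2 by norm_num,
    mul_pow]
  ring

noncomputable def oddSumScale (n N i : ℕ) (l : ℂ) : ℂ :=
  (-1) ^ i * 2 ^ N * (N ! / (i ! * (N - i)! * (2 * N + 1)‼))
    * (descPochhammer ℂ i).eval (l + n / 2 - N - 3 / 2)

theorem betaC_eq_oddSumScale_mul (n N i : ℕ) (l : ℂ) (hi : i ≤ N) :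
    betaC n N i l = oddSumScale n N i l * (descPochhammer ℂ (N - i)).eval (l + n / 2 - i - 1) := by
  obtain ⟨m, rfl⟩ := Nat.exists_eq_add_of_le hi
  have hupper : ∏ k ∈ Icc (i + 1) (i + m), (2 * l + n - 2 * (k : ℂ))
      = ∏ s ∈ range m, (2 * (l + n / 2 - i - 1) - 2 * s) := by
    rw [← Ico_add_one_right_eq_Icc, prod_Ico_eq_prod_range, show i + m + 1 - (i + 1) = m by omega]
    refine prod_congr rfl fun s _ => ?_
    push_cast
    ring
  have hlower : ∏ k ∈ Icc 1 i, (2 * l + n - 2 * (k : ℂ) - 2 * ((i + m : ℕ) : ℂ) - 1)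
      = ∏ s ∈ range i, (2 * (l + n / 2 - (i + m : ℕ) - 3 / 2) - 2 * s) := by
    rw [← Ico_add_one_right_eq_Icc, prod_Ico_eq_prod_range, Nat.add_sub_cancel]
    refine prod_congr rfl fun s _ => ?_
    push_cast
    ring
  rw [betaC, oddSumScale, hupper, hlower, prod_range_two_mul_sub, prod_range_two_mul_sub,
    Nat.add_sub_cancel_left, factorial_two_mul_add_one, Nat.cast_add_choose]
  push_cast
  field_simp
  ring

theorem summand_eq_oddSumScale_mul (n N i j : ℕ) (l : ℂ) (hij : i + j ≤ N) :
    (-1 : ℂ) ^ (N - j - i) * ((N - j).choose i : ℂ) * bC n N j l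
      = oddSumScale n N i l * ((N - i).choose j * (descPochhammer ℂ j).eval ((N : ℂ) + 1 / 2)
        * (descPochhammer ℂ (N - i - j)).eval (l + n / 2 - N - 3 / 2 - i)) := by
  obtain ⟨r, rfl⟩ := Nat.exists_eq_add_of_le hij
  have hhalf := descPochhammer_eval_add_half_mul (K := ℂ) (i + r) j
  rw [show i + r + j = i + j + r by ring] at hhalf
  have hden : 2 ^ j * ((2 * (i + r) + 1)‼ : ℂ) ≠ 0 :=
    mul_ne_zero (by simp) (Nat.cast_ne_zero.mpr (doubleFactorial_pos _).ne')
  have hsign : (-1 : ℂ) ^ r * (-1) ^ (i + r) = (-1) ^ i := by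
    rw [pow_add, mul_left_comm, ← mul_pow, neg_one_mul, neg_neg, one_pow, mul_one]
  rw [bC_eq_descPochhammer n _ j l (by omega), oddSumScale, show i + j + r - j = i + r by omega,
    Nat.add_sub_cancel_left, show i + j + r - i = j + r by omega, show j + r - j = r by omega,
    descPochhammer_add_eval, factorial_two_mul_add_one, eq_div_of_mul_eq hden hhalf,
    Nat.cast_add_choose, Nat.cast_add_choose, neg_pow (4 : ℂ),
    show (4 : ℂ) = 2 ^ 2 by norm_num, ← pow_mul, ← hsign]
  have hdoubleFac : ((2 * (i + j + r) + 1)‼ : ℂ) ≠ 0 :=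
    Nat.cast_ne_zero.mpr (doubleFactorial_pos _).ne'
  have hfac₁ : ((i + r)! : ℂ) ≠ 0 := Nat.cast_ne_zero.mpr (factorial_ne_zero _)
  have hfac₂ : ((j + r)! : ℂ) ≠ 0 := Nat.cast_ne_zero.mpr (factorial_ne_zero _)
  push_cast
  field_simp
  ring

theorem jacobi_gegenbauer_sum_odd_general (n : ℕ) (N : ℕ) (l : ℂ)
    (i : ℕ) (hi : i ≤ N) :
    ∑ j ∈ Finset.range (N - i + 1),
        (-1 : ℂ) ^ (N - j - i) * ((N - j).choose i : ℂ) * bC n N j l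
      = betaC n N i l := by
  calc ∑ j ∈ range (N - i + 1), (-1 : ℂ) ^ (N - j - i) * ((N - j).choose i : ℂ) * bC n N j l
      = oddSumScale n N i l * ∑ j ∈ range (N - i + 1), ((N - i).choose j
          * (descPochhammer ℂ j).eval ((N : ℂ) + 1 / 2)
          * (descPochhammer ℂ (N - i - j)).eval (l + n / 2 - N - 3 / 2 - i)) := by
        rw [mul_sum]
        exact sum_congr rfl fun j hj => summand_eq_oddSumScale_mul n N i j l (by have := mem_range.mp hj; omega)
    _ = oddSumScale n N i l * (descPochhammer ℂ (N - i)).eval (l + n / 2 - i - 1) := by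
        rw [← descPochhammer_eval_add_eq_sum]
        congr 2
        ring
    _ = betaC n N i l := (betaC_eq_oddSumScale_mul n N i l hi).symm

theorem jacobi_gegenbauer_sum_odd (n : ℕ) (hn : 2 ≤ n) (N : ℕ) (l : ℂ)
    (i : ℕ) (hi : i ≤ N) :
    ∑ j ∈ Finset.range (N - i + 1),
        (-1 : ℂ) ^ (N - j - i) * ((N - j).choose i : ℂ) * bC n N j l
      = betaC n N i l :=
  jacobi_gegenbauer_sum_odd_general n N l i hi
end

section
/- Hypergeometric (Jacobi polynomial) form of the α-coefficients: for every natural number n ≥ 2, every N ∈ ℕ, every λ ∈ ℂ and every i with 0 ≤ i ≤ N, one has α_i^{(N)}(λ) · i! · (1 − λ − n/2)_i = 4^N · (N!/(2N)!) · (λ + n/2 − N)_N · (−N)_i · (N + 1/2 − λ − n/2)_i. (Whenever the Pochhammer symbols (1−λ−n/2)_i are nonzero, this says that Σ_{i=0}^{N} α_i^{(N)}(λ) t^i equals the terminating hypergeometric polynomial 4^N (N!/(2N)!)(λ+n/2−N)_N · ₂F₁(−N, N+1/2−λ−n/2; 1−λ−n/2; t).) -/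
open Finset Polynomial

lemma poch_succ (a : ℂ) (k : ℕ) : poch a (k+1) = poch a k * (a + k) :=
  Finset.prod_range_succ _ _

lemma poch_succ' (a : ℂ) (k : ℕ) : poch a (k+1) = a * poch (a+1) k := by
  unfold poch
  rw [Finset.prod_range_succ', mul_comm]
  congr 1
  · simp
  · apply Finset.prod_congr rfl
    intro x _
    push_cast; ring

lemma poch_reflect (a : ℂ) (L : ℕ) : poch (-a - L + 1) L = (-1)^L * poch a L := by
  induction L with
  | zero => simp [poch]
  | succ L ih =>
    have h1 : -a - ((L+1 : ℕ) : ℂ) + 1 = (-a - L) := by push_cast; ring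
    rw [h1, poch_succ', show (-a - (L:ℂ)) + 1 = -a - L + 1 from by ring, ih, poch_succ]
    push_cast
    ring

lemma poch_add (a : ℂ) (s t : ℕ) : poch a (s+t) = poch a s * poch (a + s) t := by
  unfold poch
  rw [Finset.prod_range_add]
  congr 1
  apply Finset.prod_congr rfl
  intro x _
  push_cast; ring

lemma prod_Icc_poch (a : ℂ) (s t : ℕ) (h : s ≤ t) :
    ∏ k ∈ Finset.Icc (s+1) t, (a + (k:ℂ)) = poch (a + s + 1) (t - s) := by
  induction t, h using Nat.le_induction with
  | base =>
    rw [Finset.Icc_eq_empty (by omega), Nat.sub_self]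
    simp [poch]
  | succ t ht ih =>
    rw [Finset.prod_Icc_succ_top (by omega : s+1 ≤ t+1), ih,
      show t+1-s = (t-s)+1 from by omega, poch_succ]
    congr 1
    push_cast [Nat.cast_sub ht]
    ring

lemma poch_neg_nat (N i : ℕ) (h : i ≤ N) :
    poch (-(N:ℂ)) i = (-1)^i * ((N.descFactorial i : ℕ) : ℂ) := by
  induction i with
  | zero => simp [poch]
  | succ i ih =>
    rw [poch_succ, ih (by omega), Nat.descFactorial_succ]
    push_cast [Nat.cast_sub (by omega : i ≤ N)]
    ring

theorem alpha_hypergeometric_form (n : ℕ) (hn : 2 ≤ n) (N : ℕ) (l : ℂ)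
    (i : ℕ) (hi : i ≤ N) :
    alphaC n N i l * (i.factorial : ℂ) * poch (1 - l - (n : ℂ) / 2) i
      = 4 ^ N * ((N.factorial : ℂ) / ((2 * N).factorial : ℂ)) *
          poch (l + (n : ℂ) / 2 - (N : ℂ)) N * poch (-(N : ℂ)) i *
          poch ((N : ℂ) + 1 / 2 - l - (n : ℂ) / 2) i := by
  obtain ⟨d, rfl⟩ : ∃ d, N = d + i := ⟨N - i, by omega⟩
  -- first product
  have h1 : (∏ k ∈ Finset.Icc (i + 1) (d + i), (2 * l + (n : ℂ) - 2 * (k : ℂ)))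
      = 2 ^ d * poch (l + (n:ℂ)/2 - ((d + i : ℕ) : ℂ)) d := by
    have e1 : ∀ k ∈ Finset.Icc (i+1) (d+i), (2 * l + (n : ℂ) - 2 * (k : ℂ))
        = (-2) * ((-l - (n:ℂ)/2) + (k:ℂ)) := by intro k _; ring
    rw [Finset.prod_congr rfl e1, Finset.prod_mul_distrib, Finset.prod_const,
      Nat.card_Icc, prod_Icc_poch _ _ _ (by omega : i ≤ d + i),
      show d + i + 1 - (i + 1) = d from by omega, Nat.add_sub_cancel,
      show (-l - (n:ℂ)/2) + (i:ℂ) + 1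
          = -(l + (n:ℂ)/2 - ((d + i : ℕ) : ℂ)) - (d:ℂ) + 1 from by push_cast; ring,
      poch_reflect, ← mul_assoc, ← mul_pow]
    norm_num
  -- second product
  have h2 : (∏ k ∈ Finset.Icc 1 i, (2 * l + (n : ℂ) - 2 * (k : ℂ) - 2 * ((d + i : ℕ) : ℂ) + 1))
      = (-2) ^ i * poch (((d + i : ℕ) : ℂ) + 1/2 - l - (n:ℂ)/2) i := by
    have e1 : ∀ k ∈ Finset.Icc 1 i, (2 * l + (n : ℂ) - 2 * (k : ℂ) - 2 * ((d + i : ℕ) : ℂ) + 1)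
        = (-2) * ((((d + i : ℕ) : ℂ) - 1/2 - l - (n:ℂ)/2) + (k:ℂ)) := by intro k _; push_cast; ring
    rw [Finset.prod_congr rfl e1, Finset.prod_mul_distrib, Finset.prod_const, Nat.card_Icc,
      show Finset.Icc 1 i = Finset.Icc (0+1) i from by norm_num,
      prod_Icc_poch _ _ _ (Nat.zero_le i)]
    norm_num
    congr 1
    push_cast
    ring
  -- reflection of the LHS pochhammer
  have h3 : poch (1 - l - (n:ℂ)/2) i = (-1)^i * poch (l + (n:ℂ)/2 - (i:ℂ)) i := by
    rw [show (1 : ℂ) - l - (n:ℂ)/2 = -(l + (n:ℂ)/2 - (i:ℂ)) - (i:ℂ) + 1 from by ring,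
      poch_reflect]
  -- split of the RHS pochhammer
  have h4 : poch (l + (n:ℂ)/2 - ((d + i : ℕ) : ℂ)) (d + i)
      = poch (l + (n:ℂ)/2 - ((d + i : ℕ) : ℂ)) d * poch (l + (n:ℂ)/2 - (i:ℂ)) i := by
    rw [poch_add]
    congr 2
    push_cast; ring
  -- the poch(-N, i) factor
  have h5 : poch (-((d + i : ℕ) : ℂ)) i
      = (-1)^i * ((i.factorial : ℂ) * (((d+i).choose i : ℕ) : ℂ)) := by
    rw [poch_neg_nat _ _ (by omega), Nat.descFactorial_eq_factorial_mul_choose]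
    push_cast; ring
  rw [alphaC, h1, h2, h3, h4, h5]
  have p1 : ((-2:ℂ))^i = (-1)^i * 2^i := by rw [← mul_pow]; norm_num
  have p2 : ((4:ℂ))^(d+i) = 2^(d+i) * 2^(d+i) := by rw [← mul_pow]; norm_num
  have p3 : ((-1:ℂ))^i * (-1)^i = 1 := by rw [← mul_pow]; norm_num
  have p4 : ((-1:ℂ))^(i*3) = (-1)^i := by
    rw [pow_mul, pow_succ, ← pow_mul, mul_comm i 2, pow_mul]
    norm_num
  rw [p1, p2]
  ring_nf
  rw [p4]
end

section
/- Gegenbauer solution of the odd singular-vector system (existence part of Theorem 3.2/OddFromPtoP): let n ∈ ℕ with n ≥ 2, let N ∈ ℕ, let p ∈ ℕ with p ≤ n−1, and let λ ∈ ℂ. Define polynomials P, Q, R ∈ ℂ[t] by P(t) := (λ+p−2N−1)·Σ_{j=0}^{N} b_j^{(N)}(λ) t^j, Q(t) := Σ_{j=0}^{N} a_j^{(N)}(λ−1) t^j, and R(t) := 2N·Σ_{j=0}^{N−1} b_j^{(N−1)}(λ−1) t^j (R := 0 if N = 0). Then, with ' denoting the formal polynomial derivative, the following six identities hold in ℂ[t]: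 (1) 2t(t+1)P'' + (1−4N)tP' + (2λ+n−4N−1)P' + N(2N+1)P = 0; (2) 2P' + 2N·Q − 2tQ' + 2tR' + (λ+n−p−2N)R = 0; (3) −2P' + (λ+p−2N−1)R = 0; (4) 2tP' − (2N+1)P + (λ+p−2N−1)Q = 0; (5) 2t(t+1)Q'' + (3−4N)tQ' + (2λ+n−4N+1)Q' + N(2N−1)Q + 2tR' − (2N−1)R = 0; (6) 2t(t+1)R'' + (5−4N)tR' + (2λ+n−4N+1)R' + (N−1)(2N−1)R = 0. -/
/-!
Put `B := ∑ b_j^{(N)}(λ) t^j`. Coefficientwise identities between the Gegenbauer coefficients give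
`P = (λ + p - 2N - 1) B`, `Q = (2N + 1) B - 2t B'` and `R = 2 B'`. The two-term recurrence of the
`b_j^{(N)}(λ)` says exactly that `B` solves the hypergeometric equation (1), and differentiating (1)
gives an equation of the same type for `B'`, with `N` replaced by `N - 1`. Each of the six
identities is a linear combination of these two equations.
-/

open Finset Polynomial

namespace Polynomial

variable {R : Type*} [CommRing R]

theorem X_mul_derivative_C_mul_X_pow (a : R) (j : ℕ) :
    X * derivative (C a * X ^ j) = C (a * j) * X ^ j := by
  rcases j with _ | j
  · simp
  · rw [derivative_C_mul_X_pow, Nat.add_sub_cancel, mul_left_comm, ← pow_succ']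

/-- The constant `C (g 0)` is the `j = 0` term: `X ^ (0 - 1) = 1` in `ℕ`-exponents. -/
theorem sum_range_succ_C_mul_X_pow_add_C_mul_X_pow_pred (f g : ℕ → R) (N : ℕ) :
    ∑ j ∈ range (N + 1), (C (f j) * X ^ j + C (g j) * X ^ (j - 1))
      = ∑ j ∈ range N, C (f j + g (j + 1)) * X ^ j + C (f N) * X ^ N + C (g 0) := by
  rw [sum_add_distrib, sum_range_succ, sum_range_succ' (fun j => C (g j) * X ^ (j - 1))]
  simp only [Nat.add_sub_cancel, C_add, add_mul, sum_add_distrib, Nat.zero_sub, pow_zero, mul_one]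
  ring

noncomputable def gegenbauerOp (ν c : R) (f : R[X]) : R[X] :=
  C 2 * X * (X + 1) * derivative (derivative f) + C (1 - 4 * ν) * X * derivative f
    + C c * derivative f + C (ν * (2 * ν + 1)) * f

theorem gegenbauerOp_sum {ι : Type*} (ν c : R) (s : Finset ι) (f : ι → R[X]) :
    gegenbauerOp ν c (∑ i ∈ s, f i) = ∑ i ∈ s, gegenbauerOp ν c (f i) := by
  simp only [gegenbauerOp, derivative_sum, mul_sum, ← sum_add_distrib]

theorem gegenbauerOp_C_mul_X_pow (ν c a : R) (j : ℕ) :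
    gegenbauerOp ν c (C a * X ^ j)
      = C ((ν - j) * (2 * (ν - j) + 1) * a) * X ^ j + C (j * (2 * j - 2 + c) * a) * X ^ (j - 1) := by
  unfold gegenbauerOp
  rw [derivative_C_mul_X_pow, derivative_C_mul_X_pow]
  rcases j with _ | _ | j <;>
    simp only [Nat.add_sub_cancel, Nat.zero_sub, map_mul, map_sub, map_add,
      map_natCast, map_ofNat, map_one, map_zero, Nat.cast_zero, Nat.cast_add, Nat.cast_one] <;>
    ring

theorem derivative_gegenbauerOp (ν c : R) (f : R[X]) :
    derivative (gegenbauerOp ν c f) = gegenbauerOp (ν - 1) (c + 2) (derivative f) := by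
  simp only [gegenbauerOp, map_add, derivative_mul, derivative_C, derivative_X, derivative_one,
    derivative_ofNat, map_sub, map_mul, map_one, map_ofNat]
  ring

end Polynomial

section OddGegenbauer

variable (n : ℕ) (l : ℂ)

theorem bC_sub_one (M j : ℕ) :
    ((M : ℂ) + 1) * bC n M j (l - 1) = ((j : ℂ) + 1) * bC n (M + 1) (j + 1) l := by
  have hprod : ∏ k ∈ Ico (j + 1) (M + 1), (2 * l - 4 * ((M + 1 : ℕ) : ℂ) + 2 * (k : ℂ) + n - 1)
      = ∏ k ∈ Ico j M, (2 * (l - 1) - 4 * (M : ℂ) + 2 * (k : ℂ) + n - 1) := by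
    rw [← prod_Ico_add']
    exact prod_congr rfl fun k _ => by simp only [Nat.cast_add, Nat.cast_one]; ring
  unfold bC
  rw [hprod, show 2 * (M + 1) - 2 * (j + 1) + 1 = 2 * M - 2 * j + 1 by omega,
    show M + 1 - (j + 1) = M - j by omega, Nat.factorial_succ M, Nat.factorial_succ j]
  have hj : (j.factorial : ℂ) ≠ 0 := Nat.cast_ne_zero.2 j.factorial_ne_zero
  have hF : ((2 * M - 2 * j + 1).factorial : ℂ) ≠ 0 := Nat.cast_ne_zero.2 (Nat.factorial_ne_zero _)
  have hj1 : (j : ℂ) + 1 ≠ 0 := by norm_cast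
  push_cast
  field_simp

theorem aC_sub_one {N j : ℕ} (hj : j ≤ N) :
    aC n N j (l - 1) = (2 * ((N : ℂ) - j) + 1) * bC n N j l := by
  have hprod : ∏ k ∈ Ico j N, (2 * (l - 1) - 4 * (N : ℂ) + 2 * (k : ℂ) + n + 1)
      = ∏ k ∈ Ico j N, (2 * l - 4 * (N : ℂ) + 2 * (k : ℂ) + n - 1) :=
    prod_congr rfl fun k _ => by ring
  have hcast : ((2 * N - 2 * j + 1 : ℕ) : ℂ) = 2 * ((N : ℂ) - j) + 1 := by
    rw [Nat.cast_add, Nat.cast_sub (by omega)]; push_cast; ring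
  unfold aC bC
  rw [hprod, Nat.factorial_succ, Nat.cast_mul, hcast]
  have hj' : (j.factorial : ℂ) ≠ 0 := Nat.cast_ne_zero.2 j.factorial_ne_zero
  have hF : ((2 * N - 2 * j).factorial : ℂ) ≠ 0 := Nat.cast_ne_zero.2 (Nat.factorial_ne_zero _)
  have hodd : 2 * ((N : ℂ) - j) + 1 ≠ 0 := by rw [← hcast]; norm_cast
  field_simp

theorem bC_recurrence {N j : ℕ} (hj : j < N) :
    ((N : ℂ) - j) * (2 * ((N : ℂ) - j) + 1) * bC n N j l
      = -(((j : ℂ) + 1) * (2 * l + 2 * j + n - 4 * N - 1) * bC n N (j + 1) l) := by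
  obtain ⟨d, rfl⟩ : ∃ d, N = j + d + 1 := ⟨N - j - 1, by omega⟩
  have hodd : 2 * (((j + d + 1 : ℕ) : ℂ) - j) + 1 = 2 * d + 3 := by push_cast; ring
  have hfact : ((2 * d + 3).factorial : ℂ) = (2 * d + 3) * (2 * (d + 1)) * (2 * d + 1).factorial := by
    rw [Nat.factorial_succ, Nat.factorial_succ]; push_cast; ring
  unfold bC
  rw [hodd, show 2 * (j + d + 1) - 2 * j + 1 = 2 * d + 3 by omega,
    show 2 * (j + d + 1) - 2 * (j + 1) + 1 = 2 * d + 1 by omega,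
    show j + d + 1 - j = d + 1 by omega, show j + d + 1 - (j + 1) = d by omega,
    prod_eq_prod_Ico_succ_bot (by omega : j < j + d + 1), hfact, Nat.factorial_succ j]
  generalize ∏ k ∈ Ico (j + 1) (j + d + 1),
    (2 * l - 4 * ((j + d + 1 : ℕ) : ℂ) + 2 * (k : ℂ) + n - 1) = P
  generalize hD : 2 * (d : ℂ) + 3 = D
  have hD0 : D ≠ 0 := by rw [← hD]; norm_cast
  have hj' : (j.factorial : ℂ) ≠ 0 := Nat.cast_ne_zero.2 j.factorial_ne_zero
  have hF : ((2 * d + 1).factorial : ℂ) ≠ 0 := Nat.cast_ne_zero.2 (Nat.factorial_ne_zero _)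
  have hj1 : (j : ℂ) + 1 ≠ 0 := by norm_cast
  have hd1 : (d : ℂ) + 1 ≠ 0 := by norm_cast
  push_cast
  field_simp
  ring

noncomputable def oddGegenbauer (N : ℕ) : ℂ[X] :=
  ∑ j ∈ range (N + 1), C (bC n N j l) * X ^ j

theorem gegenbauerOp_oddGegenbauer (N : ℕ) :
    gegenbauerOp (N : ℂ) (2 * l + n - 4 * N - 1) (oddGegenbauer n l N) = 0 := by
  have hcoeff : ∀ j ∈ range N, ((N : ℂ) - j) * (2 * ((N : ℂ) - j) + 1) * bC n N j l
      + ((j + 1 : ℕ) : ℂ) * (2 * ((j + 1 : ℕ) : ℂ) - 2 + (2 * l + n - 4 * N - 1)) * bC n N (j + 1) l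
        = 0 := fun j hj => by
    rw [bC_recurrence n l (mem_range.1 hj)]
    push_cast
    ring
  rw [oddGegenbauer, gegenbauerOp_sum]
  simp only [gegenbauerOp_C_mul_X_pow]
  rw [sum_range_succ_C_mul_X_pow_add_C_mul_X_pow_pred,
    sum_eq_zero fun j hj => by rw [hcoeff j hj, C_0, zero_mul]]
  simp

theorem sum_aC_sub_one_eq (N : ℕ) :
    ∑ j ∈ range (N + 1), C (aC n N j (l - 1)) * X ^ j
      = C (2 * (N : ℂ) + 1) * oddGegenbauer n l N - C 2 * X * derivative (oddGegenbauer n l N) := by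
  simp only [oddGegenbauer, derivative_sum, mul_sum, mul_assoc, X_mul_derivative_C_mul_X_pow,
    ← sum_sub_distrib]
  refine sum_congr rfl fun j hj => ?_
  rw [aC_sub_one n l (mem_range_succ_iff.1 hj)]
  simp only [map_mul, map_sub, map_add, map_natCast, map_ofNat, map_one]
  ring

theorem sum_bC_pred_sub_one_eq (N : ℕ) :
    C (2 * (N : ℂ)) * ∑ j ∈ range N, C (bC n (N - 1) j (l - 1)) * X ^ j
      = C 2 * derivative (oddGegenbauer n l N) := by
  rcases N with _ | M
  · simp [oddGegenbauer]
  rw [oddGegenbauer, derivative_sum, sum_range_succ' _ (M + 1), Nat.add_sub_cancel, mul_sum, mul_add,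
    mul_sum]
  simp only [derivative_C_mul_X_pow, Nat.add_sub_cancel, Nat.cast_zero, mul_zero, C_0, zero_mul,
    add_zero]
  refine sum_congr rfl fun j _ => ?_
  simp only [← mul_assoc, ← C_mul]
  congr 2
  push_cast
  linear_combination 2 * bC_sub_one n l M j

end OddGegenbauer

theorem odd_singular_vector_system_existence_general (n : ℕ) (N : ℕ)
    (p : ℕ) (l : ℂ) :
    ∀ P Q R : Polynomial ℂ,
      P = Polynomial.C (l + (p : ℂ) - 2 * (N : ℂ) - 1) *
            ∑ j ∈ Finset.range (N + 1), Polynomial.C (bC n N j l) * Polynomial.X ^ j →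
      Q = ∑ j ∈ Finset.range (N + 1), Polynomial.C (aC n N j (l - 1)) * Polynomial.X ^ j →
      R = Polynomial.C (2 * (N : ℂ)) *
            ∑ j ∈ Finset.range N, Polynomial.C (bC n (N - 1) j (l - 1)) * Polynomial.X ^ j →
      (C 2 * X * (X + 1) * derivative (derivative P) + C (1 - 4 * (N : ℂ)) * X * derivative P
          + C (2 * l + (n : ℂ) - 4 * (N : ℂ) - 1) * derivative P
          + C ((N : ℂ) * (2 * (N : ℂ) + 1)) * P = 0) ∧
      (C 2 * derivative P + C (2 * (N : ℂ)) * Q - C 2 * X * derivative Q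
          + C 2 * X * derivative R + C (l + (n : ℂ) - (p : ℂ) - 2 * (N : ℂ)) * R = 0) ∧
      (-(C 2 * derivative P) + C (l + (p : ℂ) - 2 * (N : ℂ) - 1) * R = 0) ∧
      (C 2 * X * derivative P - C (2 * (N : ℂ) + 1) * P
          + C (l + (p : ℂ) - 2 * (N : ℂ) - 1) * Q = 0) ∧
      (C 2 * X * (X + 1) * derivative (derivative Q) + C (3 - 4 * (N : ℂ)) * X * derivative Q
          + C (2 * l + (n : ℂ) - 4 * (N : ℂ) + 1) * derivative Q
          + C ((N : ℂ) * (2 * (N : ℂ) - 1)) * Q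
          + C 2 * X * derivative R - C (2 * (N : ℂ) - 1) * R = 0) ∧
      (C 2 * X * (X + 1) * derivative (derivative R) + C (5 - 4 * (N : ℂ)) * X * derivative R
          + C (2 * l + (n : ℂ) - 4 * (N : ℂ) + 1) * derivative R
          + C (((N : ℂ) - 1) * (2 * (N : ℂ) - 1)) * R = 0) := by
  intro P Q R hP hQ hR
  rw [sum_aC_sub_one_eq] at hQ
  rw [sum_bC_pred_sub_one_eq] at hR
  change P = C _ * oddGegenbauer n l N at hP
  subst hP hQ hR
  have hB := gegenbauerOp_oddGegenbauer n l N
  have hB' : gegenbauerOp ((N : ℂ) - 1) (2 * l + n - 4 * N - 1 + 2)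
      (derivative (oddGegenbauer n l N)) = 0 := by
    rw [← derivative_gegenbauerOp, hB, derivative_zero]
  unfold gegenbauerOp at hB hB'
  generalize oddGegenbauer n l N = B at hB hB' ⊢
  refine ⟨?_, ?_, ?_, ?_, ?_, ?_⟩ <;>
    simp only [map_add, map_sub, map_mul, derivative_mul, derivative_C, derivative_X, derivative_ofNat,
      derivative_natCast, derivative_one, derivative_zero,
      map_natCast, map_ofNat, map_one] at hB hB' ⊢
  · linear_combination (C l + (p : ℂ[X]) - 2 * (N : ℂ[X]) - 1) * hB
  · linear_combination 2 * hB
  · ring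
  · ring
  · linear_combination (2 * (N : ℂ[X]) - 1) * hB - 2 * X * hB'
  · linear_combination 2 * hB'

theorem odd_singular_vector_system_existence (n : ℕ) (hn : 2 ≤ n) (N : ℕ)
    (p : ℕ) (hp : p ≤ n - 1) (l : ℂ) :
    ∀ P Q R : Polynomial ℂ,
      P = Polynomial.C (l + (p : ℂ) - 2 * (N : ℂ) - 1) *
            ∑ j ∈ Finset.range (N + 1), Polynomial.C (bC n N j l) * Polynomial.X ^ j →
      Q = ∑ j ∈ Finset.range (N + 1), Polynomial.C (aC n N j (l - 1)) * Polynomial.X ^ j →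
      R = Polynomial.C (2 * (N : ℂ)) *
            ∑ j ∈ Finset.range N, Polynomial.C (bC n (N - 1) j (l - 1)) * Polynomial.X ^ j →
      (C 2 * X * (X + 1) * derivative (derivative P) + C (1 - 4 * (N : ℂ)) * X * derivative P
          + C (2 * l + (n : ℂ) - 4 * (N : ℂ) - 1) * derivative P
          + C ((N : ℂ) * (2 * (N : ℂ) + 1)) * P = 0) ∧
      (C 2 * derivative P + C (2 * (N : ℂ)) * Q - C 2 * X * derivative Q
          + C 2 * X * derivative R + C (l + (n : ℂ) - (p : ℂ) - 2 * (N : ℂ)) * R = 0) ∧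
      (-(C 2 * derivative P) + C (l + (p : ℂ) - 2 * (N : ℂ) - 1) * R = 0) ∧
      (C 2 * X * derivative P - C (2 * (N : ℂ) + 1) * P
          + C (l + (p : ℂ) - 2 * (N : ℂ) - 1) * Q = 0) ∧
      (C 2 * X * (X + 1) * derivative (derivative Q) + C (3 - 4 * (N : ℂ)) * X * derivative Q
          + C (2 * l + (n : ℂ) - 4 * (N : ℂ) + 1) * derivative Q
          + C ((N : ℂ) * (2 * (N : ℂ) - 1)) * Q
          + C 2 * X * derivative R - C (2 * (N : ℂ) - 1) * R = 0) ∧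
      (C 2 * X * (X + 1) * derivative (derivative R) + C (5 - 4 * (N : ℂ)) * X * derivative R
          + C (2 * l + (n : ℂ) - 4 * (N : ℂ) + 1) * derivative R
          + C (((N : ℂ) - 1) * (2 * (N : ℂ) - 1)) * R = 0) :=
  odd_singular_vector_system_existence_general n N p l
end

section
/- Main-factorization identity for the α-coefficients at λ = k − n/2 (used in the proof of Theorem 5.6/MainFactEven1): for every natural number n ≥ 2, all natural numbers N ≥ 1 and k with 1 ≤ k ≤ N, and every i with 0 ≤ i ≤ N: if i < k then α_i^{(N)}(k − n/2) = 0, and if i ≥ k then α_i^{(N)}(k − n/2) = α_{i−k}^{(N−k)}(−k − n/2). -/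
open Finset Polynomial

/-!
At `λ = k - n/2` we have `2λ + n = 2k`, so for `i < k` the factor `m = k` of the first product
kills `α_i^{(N)}`. For `k ≤ i` write `i = k + j` and `N = k + j + r`. Both first products are
`(-2)^r` times a ratio of factorials, `(j + r)!/j!` on the left and `N!/(k + j)!` on the right. In
the second product on the left the last `j` factors are exactly the second product on the right,
while the first `k` are, up to the sign `(-1)^k`, the odd numbers `2(j + r) + 1, …, 2N - 1`, whose
product is `(2N)! (j + r)! / ((2(j + r))! 2^k N!)`. What is left is an identity between factorials.
-/

open scoped Nat

namespace Finset

variable {M : Type*} [CommMonoid M]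

theorem prod_Icc_add_left (f : ℕ → M) (a b c : ℕ) :
    ∏ m ∈ Icc (c + a) (c + b), f m = ∏ m ∈ Icc a b, f (c + m) := by
  rw [← map_add_left_Icc, prod_map]
  rfl

theorem prod_Icc_one_add (f : ℕ → M) (a b : ℕ) :
    ∏ m ∈ Icc 1 (a + b), f m = (∏ m ∈ Icc 1 a, f m) * ∏ m ∈ Icc 1 b, f (a + m) := by
  rw [← prod_Icc_add_left, Icc_add_one_left_eq_Ioc, ← zero_add 1, Icc_add_one_left_eq_Ioc,
    Icc_add_one_left_eq_Ioc, prod_Ioc_consecutive _ (Nat.zero_le a) (Nat.le_add_right a b)]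

theorem prod_Icc_add_one_const_mul (c : M) (f : ℕ → M) (a r : ℕ) :
    ∏ m ∈ Icc (a + 1) (a + r), (c * f m) = c ^ r * ∏ m ∈ Icc (a + 1) (a + r), f m := by
  rw [prod_mul_distrib, prod_const, Nat.card_Icc, show a + r + 1 - (a + 1) = r by omega]

end Finset

theorem Nat.factorial_mul_prod_Icc (a b : ℕ) :
    a ! * ∏ m ∈ Icc (a + 1) (a + b), m = (a + b)! := by
  induction b with
  | zero => simp
  | succ b ih =>
    rw [← add_assoc, prod_Icc_succ_top (by omega), ← mul_assoc, ih, Nat.factorial_succ,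
      mul_comm]

theorem factorial_mul_factorial_two_mul_add {R : Type*} [CommRing R] (y k : ℕ) :
    (y ! : R) * (2 * (y + k))! =
      (2 * y)! * 2 ^ k * (y + k)! * ∏ m ∈ Icc 1 k, (2 * (y : R) + 2 * m - 1) := by
  induction k with
  | zero => simp [mul_comm]
  | succ k ih =>
    rw [prod_Icc_succ_top (by omega), show 2 * (y + (k + 1)) = 2 * (y + k) + 1 + 1 by ring,
      Nat.factorial_succ, Nat.factorial_succ, ← add_assoc, Nat.factorial_succ]
    push_cast
    linear_combination (2 * ((y : R) + k) + 1 + 1) * (2 * (y + k) + 1) * ih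

theorem alphaC_natCast_sub_half_eq_zero (n N i k : ℕ) (hik : i < k) (hkN : k ≤ N) :
    alphaC n N i ((k : ℂ) - n / 2) = 0 := by
  have hk : k ∈ Icc (i + 1) N := mem_Icc.mpr ⟨hik, hkN⟩
  rw [alphaC, prod_eq_zero hk (by ring), mul_zero, zero_mul]

theorem alphaC_natCast_sub_half_shift (n k j r : ℕ) :
    alphaC n (k + j + r) (k + j) ((k : ℂ) - n / 2) = alphaC n (j + r) j (-(k : ℂ) - n / 2) := by
  have hP : ∏ m ∈ Icc (k + j + 1) (k + j + r), (2 * ((k : ℂ) - n / 2) + n - 2 * m) =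
      (-2) ^ r * ∏ m ∈ Icc (j + 1) (j + r), (m : ℂ) := by
    rw [add_assoc k j 1, add_assoc k j r, prod_Icc_add_left, ← prod_Icc_add_one_const_mul]
    exact prod_congr rfl fun m _ => by push_cast; ring
  have hQ : ∏ m ∈ Icc (j + 1) (j + r), (2 * (-(k : ℂ) - n / 2) + n - 2 * m) =
      (-2) ^ r * ∏ m ∈ Icc (k + j + 1) (k + j + r), (m : ℂ) := by
    rw [add_assoc k j 1, add_assoc k j r, prod_Icc_add_left _ (j + 1),
      ← prod_Icc_add_one_const_mul]
    exact prod_congr rfl fun m _ => by push_cast; ring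
  have hR : ∏ m ∈ Icc 1 (k + j),
        (2 * ((k : ℂ) - n / 2) + n - 2 * m - 2 * ((k + j + r : ℕ) : ℂ) + 1) =
      (∏ m ∈ Icc 1 k, -(2 * ((j + r : ℕ) : ℂ) + 2 * m - 1)) * ∏ m ∈ Icc 1 j,
        (2 * (-(k : ℂ) - n / 2) + n - 2 * m - 2 * ((j + r : ℕ) : ℂ) + 1) := by
    rw [prod_Icc_one_add]
    congr 1 <;> exact prod_congr rfl fun m _ => by push_cast; ring
  unfold alphaC
  rw [hP, hQ, hR, prod_neg, Nat.card_Icc, Nat.add_sub_cancel,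
    Nat.cast_choose ℂ (Nat.le_add_right (k + j) r), Nat.cast_choose ℂ (Nat.le_add_right j r),
    Nat.add_sub_cancel_left, Nat.add_sub_cancel_left]
  have h1 : (j ! : ℂ) * ∏ m ∈ Icc (j + 1) (j + r), (m : ℂ) = (j + r)! := by
    rw [← Nat.cast_prod, ← Nat.cast_mul, Nat.factorial_mul_prod_Icc]
  have h2 : ((k + j)! : ℂ) * ∏ m ∈ Icc (k + j + 1) (k + j + r), (m : ℂ) = (k + j + r)! := by
    rw [← Nat.cast_prod, ← Nat.cast_mul, Nat.factorial_mul_prod_Icc]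
  have h3 := factorial_mul_factorial_two_mul_add (R := ℂ) (j + r) k
  rw [show j + r + k = k + j + r by ring] at h3
  rw [← h1, ← h2] at h3 ⊢
  -- the products now enter only through `h3`, so they can be treated as unknowns
  generalize ∏ m ∈ Icc (j + 1) (j + r), (m : ℂ) = P at h3 ⊢
  generalize ∏ m ∈ Icc (k + j + 1) (k + j + r), (m : ℂ) = Q at h3 ⊢
  generalize ∏ m ∈ Icc 1 k, (2 * ((j + r : ℕ) : ℂ) + 2 * m - 1) = O at h3 ⊢
  generalize ∏ m ∈ Icc 1 j,
    (2 * (-(k : ℂ) - n / 2) + n - 2 * m - 2 * ((j + r : ℕ) : ℂ) + 1) = R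
  have hsign : (-1 : ℂ) ^ (k + j) * (-1) ^ k = (-1) ^ j := by
    rw [← pow_add, add_right_comm, pow_add, ← two_mul, pow_mul, neg_one_sq, one_pow, one_mul]
  field_simp
  rw [div_eq_div_iff (by simp [Nat.factorial_ne_zero]) (by simp [Nat.factorial_ne_zero])]
  linear_combination (-(Q * P * R * (-1) ^ j * 2 ^ (j + r) * r !)) * h3 +
    (2 ^ (k + j + r) * (k + j)! * Q ^ 2 * P * O * R * (2 * (j + r))! * r !) * hsign

theorem alpha_main_factorization_first_general (n : ℕ) (N k : ℕ)
    (hkN : k ≤ N) (i : ℕ) (hi : i ≤ N) :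
    (i < k → alphaC n N i ((k : ℂ) - (n : ℂ) / 2) = 0) ∧
    (k ≤ i → alphaC n N i ((k : ℂ) - (n : ℂ) / 2)
        = alphaC n (N - k) (i - k) (-(k : ℂ) - (n : ℂ) / 2)) := by
  refine ⟨fun hik => alphaC_natCast_sub_half_eq_zero n N i k hik hkN, fun hki => ?_⟩
  obtain ⟨j, rfl⟩ := Nat.exists_eq_add_of_le hki
  obtain ⟨r, rfl⟩ := Nat.exists_eq_add_of_le hi
  rw [add_assoc k j r, Nat.add_sub_cancel_left, Nat.add_sub_cancel_left, ← add_assoc]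
  exact alphaC_natCast_sub_half_shift n k j r

theorem alpha_main_factorization_first (n : ℕ) (hn : 2 ≤ n) (N k : ℕ) (hN : 1 ≤ N)
    (hk1 : 1 ≤ k) (hkN : k ≤ N) (i : ℕ) (hi : i ≤ N) :
    (i < k → alphaC n N i ((k : ℂ) - (n : ℂ) / 2) = 0) ∧
    (k ≤ i → alphaC n N i ((k : ℂ) - (n : ℂ) / 2)
        = alphaC n (N - k) (i - k) (-(k : ℂ) - (n : ℂ) / 2)) :=
  alpha_main_factorization_first_general n N k hkN i hi
end

section
/- Main-factorization identity for the α-coefficients at λ = 2N − k − (n−1)/2 (used in the proof of Theorem 5.6/MainFactEven1): for every natural number n ≥ 2, all natural numbers N ≥ 1 and k with 1 ≤ k ≤ N, and every i with 0 ≤ i ≤ N: if i > N−k then α_i^{(N)}(2N − k − (n−1)/2) = 0, and if i ≤ N−k then α_i^{(N)}(2N − k − (n−1)/2) = α_i^{(N−k)}(2N − k − (n−1)/2). -/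
open Finset Polynomial

/-! Put `M = N - k`; the point `λ = 2N - k - (n - 1)/2` is exactly where `2λ + n = 2N + 2M + 1`.
There the factors of the second product in `α_i^{(N)}(λ)` are `2(M + 1 - j)`, so it vanishes as
soon as `i > M` and equals `2^i M!/(M - i)!` otherwise, while the first product is the run of odd
numbers `2M + 1, …, 2(N + M - i) - 1`. Writing both as factorial ratios gives a closed form of
`α_i^{(N)}(λ)` that is symmetric in `N` and `M`, hence equal to `α_i^{(M)}(λ)`. -/

open Nat

theorem prod_range_odd_mul_two_pow_mul_factorial (m : ℕ) :
    (∏ j ∈ range m, (2 * j + 1)) * (2 ^ m * m !) = (2 * m)! := by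
  induction m with
  | zero => rfl
  | succ m ih =>
    rw [prod_range_succ, show 2 * (m + 1) = 2 * m + 1 + 1 by ring, factorial_succ, factorial_succ,
      factorial_succ, ← ih]
    ring

theorem prod_Icc_two_mul_sub_mul_factorial {M i : ℕ} (hi : i ≤ M) :
    (∏ k ∈ Icc 1 i, (2 * (M : ℂ) + 2 - 2 * k)) * ((M - i)! : ℂ) = 2 ^ i * M ! := by
  induction i with
  | zero => simp
  | succ i ih =>
    have hsucc : ((M - i)! : ℂ) = (M - i) * (M - (i + 1))! := by
      rw [show M - i = M - (i + 1) + 1 by omega, factorial_succ]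
      push_cast [Nat.cast_sub hi]
      ring
    have ih := ih (by omega)
    rw [hsucc] at ih
    rw [prod_Icc_succ_top (by omega)]
    push_cast
    linear_combination 2 * ih

theorem prod_range_odd_mul_prod_Icc {N M i : ℕ} (hi : i ≤ N) :
    (∏ j ∈ range M, (2 * (j : ℂ) + 1)) *
        ∏ k ∈ Icc (i + 1) N, (2 * (N : ℂ) + 2 * M + 1 - 2 * k) =
      ∏ j ∈ range (N + M - i), (2 * (j : ℂ) + 1) := by
  have hreflect : ∏ k ∈ Icc (i + 1) N, (2 * (N : ℂ) + 2 * M + 1 - 2 * k) =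
      ∏ j ∈ Ico M (N + M - i), (2 * (j : ℂ) + 1) := by
    rw [← Ico_add_one_right_eq_Icc]
    have := prod_Ico_reflect (fun j : ℕ => 2 * (j : ℂ) + 1) (i + 1) (n := N + M) (m := N + 1)
      (by omega)
    rw [show N + M + 1 - (N + 1) = M by omega, show N + M + 1 - (i + 1) = N + M - i by omega]
      at this
    rw [← this]
    refine prod_congr rfl fun k hk => ?_
    push_cast [Nat.cast_sub (show k ≤ N + M by simp at hk; omega)]
    ring
  rw [hreflect, prod_range_mul_prod_Ico _ (by omega)]

section

variable {n N M i : ℕ} {l : ℂ}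

theorem alphaC_eq_zero_of_two_mul_add (hl : 2 * l + n = 2 * N + 2 * M + 1) (hMi : M < i) :
    alphaC n N i l = 0 := by
  unfold alphaC
  exact mul_eq_zero_of_right _
    (prod_eq_zero (i := M + 1) (by simp; omega) (by push_cast; linear_combination hl))

theorem alphaC_eq_of_two_mul_add (hl : 2 * l + n = 2 * N + 2 * M + 1) (hiN : i ≤ N)
    (hiM : i ≤ M) :
    alphaC n N i l = (-1) ^ i * 2 ^ (N + M + i) * ((N ! : ℂ) * M !) ^ 2 *
      (∏ j ∈ range (N + M - i), (2 * (j : ℂ) + 1)) /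
        ((2 * N)! * (2 * M)! * i ! * (N - i)! * (M - i)!) := by
  have hfact : ∀ m : ℕ, (m ! : ℂ) ≠ 0 := fun m => mod_cast m.factorial_ne_zero
  have hoddM : (∏ j ∈ range M, (2 * (j : ℂ) + 1)) * (2 ^ M * M !) = (2 * M)! := by
    exact_mod_cast prod_range_odd_mul_two_pow_mul_factorial M
  have hodd : ∏ k ∈ Icc (i + 1) N, (2 * l + n - 2 * (k : ℂ)) =
      (∏ j ∈ range (N + M - i), (2 * (j : ℂ) + 1)) * (2 ^ M * M !) / (2 * M)! := by
    rw [eq_div_iff (hfact _), ← hoddM, ← prod_range_odd_mul_prod_Icc hiN, hl]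
    ring
  have heven :
      ∏ k ∈ Icc 1 i, (2 * l + n - 2 * (k : ℂ) - 2 * N + 1) = 2 ^ i * M ! / (M - i)! := by
    rw [eq_div_iff (hfact _), ← prod_Icc_two_mul_sub_mul_factorial hiM]
    congr 1
    exact prod_congr rfl fun k _ => by linear_combination hl
  unfold alphaC
  rw [hodd, heven, Nat.cast_choose ℂ hiN]
  field_simp
  ring

theorem alphaC_eq_alphaC_of_two_mul_add (hl : 2 * l + n = 2 * N + 2 * M + 1) (hiN : i ≤ N)
    (hiM : i ≤ M) : alphaC n N i l = alphaC n M i l := by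
  rw [alphaC_eq_of_two_mul_add hl hiN hiM,
    alphaC_eq_of_two_mul_add (by rw [hl]; ring) hiM hiN, add_comm M N]
  ring

end

theorem alpha_main_factorization_second_general (n : ℕ) (N k : ℕ)
    (hkN : k ≤ N) (i : ℕ) (hi : i ≤ N) :
    (N - k < i → alphaC n N i (2 * (N : ℂ) - (k : ℂ) - ((n : ℂ) - 1) / 2) = 0) ∧
    (i ≤ N - k → alphaC n N i (2 * (N : ℂ) - (k : ℂ) - ((n : ℂ) - 1) / 2)
        = alphaC n (N - k) i (2 * (N : ℂ) - (k : ℂ) - ((n : ℂ) - 1) / 2)) := by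
  have hl : 2 * (2 * (N : ℂ) - k - ((n : ℂ) - 1) / 2) + n =
      2 * N + 2 * ((N - k : ℕ) : ℂ) + 1 := by
    push_cast [Nat.cast_sub hkN]
    ring
  exact ⟨alphaC_eq_zero_of_two_mul_add hl, alphaC_eq_alphaC_of_two_mul_add hl hi⟩

theorem alpha_main_factorization_second (n : ℕ) (hn : 2 ≤ n) (N k : ℕ) (hN : 1 ≤ N)
    (hk1 : 1 ≤ k) (hkN : k ≤ N) (i : ℕ) (hi : i ≤ N) :
    (N - k < i → alphaC n N i (2 * (N : ℂ) - (k : ℂ) - ((n : ℂ) - 1) / 2) = 0) ∧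
    (i ≤ N - k → alphaC n N i (2 * (N : ℂ) - (k : ℂ) - ((n : ℂ) - 1) / 2)
        = alphaC n (N - k) i (2 * (N : ℂ) - (k : ℂ) - ((n : ℂ) - 1) / 2)) :=
  alpha_main_factorization_second_general n N k hkN i hi
end

section
/- Main-factorization identity for the β-coefficients at λ = k − n/2 (used in the proof of Theorem 5.8/MainFactOdd1): for every natural number n ≥ 2, all natural numbers N ≥ 1 and k with 1 ≤ k ≤ N, and every i with 0 ≤ i ≤ N: if i < k then β_i^{(N)}(k − n/2) = 0, and if i ≥ k then β_i^{(N)}(k − n/2) = β_{i−k}^{(N−k)}(−k − n/2). -/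
open Finset Polynomial

/-! At λ = k − n/2 we have 2λ + n = 2k, so for i < k the factor with index k of the first product
vanishes. For i ≥ k write N = M + k and i = p + k. Using 2^N N!/(2N+1)! = 1/(2N+1)‼, the even
factors assemble into descending factorials and the odd ones into quotients of double factorials,
and both sides reduce to the same expression, symmetric under the exchange of (M, p) and
(M + k, p + k). -/

open scoped Nat

theorem Finset.prod_Icc_add' {α M : Type*} [CommMonoid M] [AddCommMonoid α] [PartialOrder α]
    [IsOrderedCancelAddMonoid α] [ExistsAddOfLE α] [LocallyFiniteOrder α]
    (f : α → M) (a b c : α) : ∏ x ∈ Icc a b, f (x + c) = ∏ x ∈ Icc (a + c) (b + c), f x := by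
  rw [← map_add_right_Icc, prod_map]
  rfl

theorem prod_Icc_succ_eq_factorial_mul_choose {a b : ℕ} (h : a ≤ b) :
    ∏ j ∈ Icc (a + 1) b, j = (b - a)! * b.choose a := by
  have hfac : a ! * ∏ j ∈ Icc (a + 1) b, j = b ! := by
    induction b, h using Nat.le_induction with
    | base => simp
    | succ b hab ih =>
      rw [prod_Icc_succ_top (by omega), ← mul_assoc, ih, Nat.factorial_succ, mul_comm]
  apply Nat.eq_of_mul_eq_mul_left (Nat.factorial_pos a)
  rw [hfac, ← Nat.choose_mul_factorial_mul_factorial h]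
  ring

theorem doubleFactorial_mul_prod_Icc_odd (c p : ℕ) :
    (2 * c + 1)‼ * ∏ j ∈ Icc 1 p, (2 * (c + j) + 1) = (2 * (c + p) + 1)‼ := by
  induction p with
  | zero => simp
  | succ p ih =>
    rw [prod_Icc_succ_top (by omega), ← mul_assoc, ih,
      show 2 * (c + (p + 1)) + 1 = 2 * (c + p) + 1 + 2 by ring, Nat.doubleFactorial_add_two]
    ring

theorem two_pow_mul_factorial_div_factorial_eq_inv_doubleFactorial (N : ℕ) :
    (2 : ℂ) ^ N * (N ! / (2 * N + 1)!) = ((2 * N + 1)‼ : ℂ)⁻¹ := by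
  rw [Nat.factorial_eq_mul_doubleFactorial, Nat.doubleFactorial_two_mul]
  have hN : (N ! : ℂ) ≠ 0 := Nat.cast_ne_zero.2 N.factorial_ne_zero
  have hodd : ((2 * N + 1)‼ : ℂ) ≠ 0 := Nat.cast_ne_zero.2 (Nat.doubleFactorial_pos _).ne'
  push_cast
  field_simp

theorem prod_Icc_neg_two_mul {a b : ℕ} (h : a ≤ b) :
    ∏ j ∈ Icc (a + 1) b, (-2 * (j : ℂ)) = (-2) ^ (b - a) * ((b - a)! * b.choose a : ℕ) := by
  rw [prod_mul_distrib, prod_const, Nat.card_Icc, ← Nat.cast_prod,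
    prod_Icc_succ_eq_factorial_mul_choose h, Nat.add_sub_add_right]

theorem prod_Icc_neg_odd_eq_div_doubleFactorial (c p : ℕ) :
    ∏ j ∈ Icc 1 p, (-(2 * ((c + j : ℕ) : ℂ)) - 1) =
      (-1) ^ p * (2 * (c + p) + 1)‼ / (2 * c + 1)‼ := by
  rw [eq_div_iff (Nat.cast_ne_zero.2 (Nat.doubleFactorial_pos _).ne'),
    ← doubleFactorial_mul_prod_Icc_odd c p]
  have hfactor : ∀ j ∈ Icc 1 p,
      (-(2 * ((c + j : ℕ) : ℂ)) - 1) = -1 * ((2 * (c + j) + 1 : ℕ) : ℂ) := by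
    intro j _
    push_cast
    ring
  rw [prod_congr rfl hfactor, prod_mul_distrib, prod_const, Nat.card_Icc, Nat.add_sub_cancel]
  push_cast
  ring

theorem betaC_eq_zero_of_lt {n N k i : ℕ} (hik : i < k) (hkN : k ≤ N) :
    betaC n N i (k - n / 2) = 0 := by
  have hk : k ∈ Icc (i + 1) N := mem_Icc.2 ⟨hik, hkN⟩
  rw [betaC, prod_eq_zero hk (by ring), mul_zero, zero_mul]

theorem betaC_eq_div_doubleFactorial (n N i : ℕ) (l : ℂ) :
    betaC n N i l = (-1) ^ i * N.choose i *
      (∏ k ∈ Icc (i + 1) N, (2 * l + n - 2 * k)) *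
      (∏ k ∈ Icc 1 i, (2 * l + n - 2 * k - 2 * N - 1)) / (2 * N + 1)‼ := by
  rw [betaC, mul_assoc ((-1 : ℂ) ^ i), two_pow_mul_factorial_div_factorial_eq_inv_doubleFactorial]
  ring

theorem betaC_add_add_natCast_sub_half (n M p k : ℕ) (hp : p ≤ M) :
    betaC n (M + k) (p + k) (k - n / 2) =
      (-2) ^ (M - p) * ((M - p)! * M.choose p : ℕ) * (M + k).choose (p + k) *
        (2 * (M + (p + k)) + 1)‼ / ((2 * M + 1)‼ * (2 * (M + k) + 1)‼) := by
  have h₁ : ∏ j ∈ Icc (p + k + 1) (M + k), (2 * ((k : ℂ) - n / 2) + n - 2 * j)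
      = (-2) ^ (M - p) * ((M - p)! * M.choose p : ℕ) := by
    rw [show p + k + 1 = p + 1 + k by ring, ← prod_Icc_add', ← prod_Icc_neg_two_mul hp]
    exact prod_congr rfl fun j _ => by push_cast; ring
  have h₂ : ∏ j ∈ Icc 1 (p + k),
      (2 * ((k : ℂ) - n / 2) + n - 2 * j - 2 * ((M + k : ℕ) : ℂ) - 1)
      = (-1) ^ (p + k) * (2 * (M + (p + k)) + 1)‼ / (2 * M + 1)‼ := by
    rw [← prod_Icc_neg_odd_eq_div_doubleFactorial]
    exact prod_congr rfl fun j _ => by push_cast; ring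
  rw [betaC_eq_div_doubleFactorial, h₁, h₂]
  field_simp
  rw [← pow_mul, pow_mul', neg_one_sq, one_pow, one_mul]

theorem betaC_neg_natCast_sub_half (n M p k : ℕ) (hp : p ≤ M) :
    betaC n M p (-k - n / 2) =
      (-2) ^ (M - p) * ((M - p)! * M.choose p : ℕ) * (M + k).choose (p + k) *
        (2 * (M + (p + k)) + 1)‼ / ((2 * M + 1)‼ * (2 * (M + k) + 1)‼) := by
  have h₁ : ∏ j ∈ Icc (p + 1) M, (2 * (-(k : ℂ) - n / 2) + n - 2 * j)
      = (-2) ^ (M - p) * ((M - p)! * (M + k).choose (p + k) : ℕ) := by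
    rw [← Nat.add_sub_add_right M k p, ← prod_Icc_neg_two_mul (by omega : p + k ≤ M + k),
      show p + k + 1 = p + 1 + k by ring, ← prod_Icc_add']
    exact prod_congr rfl fun j _ => by push_cast; ring
  have h₂ : ∏ j ∈ Icc 1 p, (2 * (-(k : ℂ) - n / 2) + n - 2 * j - 2 * (M : ℂ) - 1)
      = (-1) ^ p * (2 * (M + k + p) + 1)‼ / (2 * (M + k) + 1)‼ := by
    rw [← prod_Icc_neg_odd_eq_div_doubleFactorial]
    exact prod_congr rfl fun j _ => by push_cast; ring
  rw [betaC_eq_div_doubleFactorial, h₁, h₂]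
  field_simp
  rw [← pow_mul, pow_mul', neg_one_sq, one_pow, one_mul, show M + k + p = M + (p + k) by ring]
  push_cast
  ring

theorem beta_main_factorization_first_general (n : ℕ) (N k : ℕ)
    (hkN : k ≤ N) (i : ℕ) (hi : i ≤ N) :
    (i < k → betaC n N i ((k : ℂ) - (n : ℂ) / 2) = 0) ∧
    (k ≤ i → betaC n N i ((k : ℂ) - (n : ℂ) / 2)
        = betaC n (N - k) (i - k) (-(k : ℂ) - (n : ℂ) / 2)) := by
  refine ⟨fun hik => betaC_eq_zero_of_lt hik hkN, fun hki => ?_⟩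
  obtain ⟨M, rfl⟩ := Nat.exists_eq_add_of_le' hkN
  obtain ⟨p, rfl⟩ := Nat.exists_eq_add_of_le' hki
  have hp : p ≤ M := by omega
  rw [Nat.add_sub_cancel, Nat.add_sub_cancel, betaC_add_add_natCast_sub_half n M p k hp,
    betaC_neg_natCast_sub_half n M p k hp]

theorem beta_main_factorization_first (n : ℕ) (hn : 2 ≤ n) (N k : ℕ) (hN : 1 ≤ N)
    (hk1 : 1 ≤ k) (hkN : k ≤ N) (i : ℕ) (hi : i ≤ N) :
    (i < k → betaC n N i ((k : ℂ) - (n : ℂ) / 2) = 0) ∧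
    (k ≤ i → betaC n N i ((k : ℂ) - (n : ℂ) / 2)
        = betaC n (N - k) (i - k) (-(k : ℂ) - (n : ℂ) / 2)) :=
  beta_main_factorization_first_general n N k hkN i hi
end

section
/- Supplementary-factorization coefficient identity (rel-4a in the proof of Theorem 5.10/SuppFact): for every natural number n ≥ 2, every N ∈ ℕ, every p ∈ ℂ and every i with 0 ≤ i ≤ N, one has (n − 2p + 2N)·(2N+1)·β_i^{(N)}(−n + p + 1) = (n − 2p + 2i)·α_i^{(N)}(−n + p). -/
open Finset Polynomial

theorem supplementary_factorization_rel4a (n : ℕ) (hn : 2 ≤ n) (N : ℕ) (p : ℂ)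
    (i : ℕ) (hi : i ≤ N) :
    ((n : ℂ) - 2 * p + 2 * (N : ℂ)) * (2 * (N : ℂ) + 1) * betaC n N i (-(n : ℂ) + p + 1)
      = ((n : ℂ) - 2 * p + 2 * (i : ℂ)) * alphaC n N i (-(n : ℂ) + p) := by
  have key : ∀ (c : ℂ) (i N : ℕ), i ≤ N →
      (c - 2 * (N : ℂ)) * ∏ k ∈ Finset.Icc (i + 1) N, (c + 2 - 2 * (k : ℂ))
        = (c - 2 * (i : ℂ)) * ∏ k ∈ Finset.Icc (i + 1) N, (c - 2 * (k : ℂ)) := by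
    intro c i N h
    induction N, h using Nat.le_induction with
    | base => simp
    | succ N hN ih =>
      rw [Finset.prod_Icc_succ_top (by omega), Finset.prod_Icc_succ_top (by omega)]
      push_cast
      linear_combination (c - 2 * ((N : ℂ) + 1)) * ih
  unfold betaC alphaC
  have h2 : (∏ k ∈ Finset.Icc 1 i,
        (2 * (-(n : ℂ) + p + 1) + (n : ℂ) - 2 * (k : ℂ) - 2 * (N : ℂ) - 1))
      = ∏ k ∈ Finset.Icc 1 i,
        (2 * (-(n : ℂ) + p) + (n : ℂ) - 2 * (k : ℂ) - 2 * (N : ℂ) + 1) :=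
    Finset.prod_congr rfl (fun k _ => by ring)
  have hb : (∏ k ∈ Finset.Icc (i + 1) N,
        (2 * (-(n : ℂ) + p + 1) + (n : ℂ) - 2 * (k : ℂ)))
      = ∏ k ∈ Finset.Icc (i + 1) N, ((2 * p - (n : ℂ)) + 2 - 2 * (k : ℂ)) :=
    Finset.prod_congr rfl (fun k _ => by ring)
  have ha : (∏ k ∈ Finset.Icc (i + 1) N,
        (2 * (-(n : ℂ) + p) + (n : ℂ) - 2 * (k : ℂ)))
      = ∏ k ∈ Finset.Icc (i + 1) N, ((2 * p - (n : ℂ)) - 2 * (k : ℂ)) :=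
    Finset.prod_congr rfl (fun k _ => by ring)
  rw [h2, hb, ha]
  have h1 := key (2 * p - (n : ℂ)) i N hi
  have hfac : (((2 * N + 1).factorial : ℂ)) = (2 * (N : ℂ) + 1) * ((2 * N).factorial : ℂ) := by
    rw [Nat.factorial_succ]; push_cast; ring
  have hne : ((2 * N).factorial : ℂ) ≠ 0 := Nat.cast_ne_zero.mpr (Nat.factorial_ne_zero _)
  have hne1 : (2 * (N : ℂ) + 1) ≠ 0 := by
    have : ((2 * N + 1 : ℕ) : ℂ) ≠ 0 := Nat.cast_ne_zero.mpr (by omega)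
    push_cast at this
    convert this using 2
  have hdiv : (2 * (N : ℂ) + 1) * ((N.factorial : ℂ) / ((2 * N + 1).factorial : ℂ))
      = (N.factorial : ℂ) / ((2 * N).factorial : ℂ) := by
    rw [hfac]
    field_simp
  set Q := ∏ k ∈ Finset.Icc 1 i,
      (2 * (-(n : ℂ) + p) + (n : ℂ) - 2 * (k : ℂ) - 2 * (N : ℂ) + 1) with hQ
  set Pb := ∏ k ∈ Finset.Icc (i + 1) N, ((2 * p - (n : ℂ)) + 2 - 2 * (k : ℂ)) with hPb
  set Pa := ∏ k ∈ Finset.Icc (i + 1) N, ((2 * p - (n : ℂ)) - 2 * (k : ℂ)) with hPa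
  set f0 := (N.factorial : ℂ) / ((2 * N).factorial : ℂ) with hf0
  set f1 := (N.factorial : ℂ) / ((2 * N + 1).factorial : ℂ) with hf1
  linear_combination
    (((n : ℂ) - 2 * p + 2 * (N : ℂ)) * ((-1 : ℂ) ^ i * 2 ^ N * (N.choose i : ℂ)) * Q * Pb) * hdiv
      - (((-1 : ℂ) ^ i * 2 ^ N * (N.choose i : ℂ)) * f0 * Q) * h1
end

section
/- Supplementary-factorization coefficient identity (rel-3a in the proof of Theorem 5.10/SuppFact): for every natural number n ≥ 2, every natural number N ≥ 1, every p ∈ ℂ and every i with 1 ≤ i ≤ N, one has γ_i^{(N)}(p − n + 2N + 1; n − p) = α_i^{(N)}(p − n + 2N + 1). -/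
open Finset Polynomial

/-!
Under the substitution `λ = p - n + 2N + 1`, `p ↦ n - p` one has `λ + p = 2N + 1`, which kills the
first summand of the bracket in `γ`; the second summand then supplies the factor
`2λ + n - 2N - 1`, which is exactly the `k = 1` factor of the second product in `α`, the
remaining factors of that product being those of `γ` shifted by one. What is left is the identity
`binom(N+1, i) (N + 1 - i) = (N + 1) binom(N, i)` together with `(2N+1)! = (2N+1) (2N)!`.
-/

lemma prod_Icc_one_add_one {M : Type*} [CommMonoid M] (f : ℕ → M) (m : ℕ) :
    ∏ k ∈ Icc 1 (m + 1), f k = f 1 * ∏ k ∈ Icc 1 m, f (k + 1) := by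
  rw [← insert_Icc_add_one_left_eq_Icc (by omega), prod_insert (by simp), ← map_add_right_Icc,
    prod_map]
  rfl

-- Both sides vanish for `i > N + 1`, where the truncated subtraction in `Nat.choose_mul_succ_eq`
-- would not match `N - i + 1`.
lemma choose_succ_mul_sub_add_one {R : Type*} [CommRing R] (N i : ℕ) :
    ((N + 1).choose i : R) * (N - i + 1) = (N + 1) * N.choose i := by
  rcases le_or_gt i (N + 1) with hi | hi
  · have h := congrArg (Nat.cast (R := R)) (Nat.choose_mul_succ_eq N i)
    push_cast [Nat.cast_sub hi] at h
    linear_combination -h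
  · simp [Nat.choose_eq_zero_of_lt hi, Nat.choose_eq_zero_of_lt (Nat.lt_of_succ_lt hi)]

lemma gammaC_prefactor_mul_eq_alphaC_prefactor (N i : ℕ) :
    (N.factorial : ℂ) / ((N + 1) * (2 * N + 1).factorial) * (N + 1).choose i
        * ((2 * N + 1) * (N - i + 1))
      = N.factorial / (2 * N).factorial * N.choose i := by
  have hN : (N + 1 : ℂ) ≠ 0 := by exact_mod_cast N.succ_ne_zero
  have h2N : (2 * N + 1 : ℂ) ≠ 0 := by exact_mod_cast (2 * N).succ_ne_zero
  have hfac : ((2 * N).factorial : ℂ) ≠ 0 := by exact_mod_cast (2 * N).factorial_ne_zero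
  rw [Nat.factorial_succ, Nat.cast_mul, Nat.cast_succ, Nat.cast_mul, Nat.cast_two]
  simp only [div_mul_eq_mul_div]
  rw [div_eq_div_iff (by simp [*]) hfac]
  linear_combination
    (N.factorial : ℂ) * (2 * N + 1) * (2 * N).factorial * choose_succ_mul_sub_add_one (R := ℂ) N i

section
variable (n N i : ℕ) (l p : ℂ)

lemma alphaC_lower_prod_eq_mul (hi : 1 ≤ i) :
    ∏ k ∈ Icc 1 i, (2 * l + n - 2 * (k : ℂ) - 2 * N + 1)
      = (2 * l + n - 2 * N - 1) * ∏ k ∈ Icc 1 (i - 1), (2 * l + n - 2 * (k : ℂ) - 2 * N - 1) := by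
  obtain ⟨m, rfl⟩ := Nat.exists_eq_add_of_le' hi
  rw [prod_Icc_one_add_one, Nat.add_sub_cancel]
  push_cast
  ring_nf

lemma gammaC_bracket_of_add_eq (h : l + p = 2 * N + 1) :
    (l + p - 2 * N - 1) * (N + 1) * (2 * l + n - 2 * i) + (l + n - p) * (2 * N + 1) * (N - i + 1)
      = (2 * l + n - 2 * N - 1) * (2 * N + 1) * (N - i + 1) := by
  linear_combination ((N + 1) * (2 * l + n - 2 * i) - (2 * N + 1) * (N - i + 1)) * h

theorem gammaC_eq_alphaC_of_add_eq (h : l + p = 2 * N + 1) (hi : 1 ≤ i) :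
    gammaC n N i l p = alphaC n N i l := by
  rw [gammaC, alphaC, gammaC_bracket_of_add_eq n N i l p h, alphaC_lower_prod_eq_mul n N i l hi]
  set P := ∏ k ∈ Icc (i + 1) N, (2 * l + n - 2 * (k : ℂ))
  set Q := ∏ k ∈ Icc 1 (i - 1), (2 * l + n - 2 * (k : ℂ) - 2 * N - 1)
  linear_combination
    (-1) ^ i * 2 ^ N * (2 * l + n - 2 * N - 1) * P * Q * gammaC_prefactor_mul_eq_alphaC_prefactor N i

end

theorem supplementary_factorization_rel3a_general (n : ℕ) (N : ℕ)
    (p : ℂ) (i : ℕ) (hi1 : 1 ≤ i) :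
    gammaC n N i (p - (n : ℂ) + 2 * (N : ℂ) + 1) ((n : ℂ) - p)
      = alphaC n N i (p - (n : ℂ) + 2 * (N : ℂ) + 1) :=
  gammaC_eq_alphaC_of_add_eq n N i _ _ (by ring) hi1

theorem supplementary_factorization_rel3a (n : ℕ) (hn : 2 ≤ n) (N : ℕ) (hN : 1 ≤ N)
    (p : ℂ) (i : ℕ) (hi1 : 1 ≤ i) (hiN : i ≤ N) :
    gammaC n N i (p - (n : ℂ) + 2 * (N : ℂ) + 1) ((n : ℂ) - p)
      = alphaC n N i (p - (n : ℂ) + 2 * (N : ℂ) + 1) :=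
  supplementary_factorization_rel3a_general n N p i hi1
end
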